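/- arXiv:2003.06301 — 4 statements merged into one kernel-verified Lean document; each statement's English description precedes it below -/
import Mathlib

section
/- Let r : ℂⁿ → ℂⁿ be a change of variables with invertible Jacobian (generically), k a positive integer, and for smooth f let ∂^≤k f denote the column vector of all partial derivatives of f of orders 0 through k (with mixed partials counted once, ordered by degree then lexicographically). Then there is a matrix M(z), whose entries are polynomials in the partial derivatives of the rᵢ, such that for every smooth y, ∂^≤k(y ∘ r)(z) = M(z) · (∂^≤k y)(r(z)), and M(z) is invertible (its inverse N has entries that are rational functions of the partial derivatives of r). -/
/-!
Iterating the chain rule `∂ᵢ (y ∘ g) = ∑ⱼ (∂ⱼ y ∘ g) · ∂ᵢ gⱼ` and the Leibniz rule expresses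
`∂^v (y ∘ g)` as `∑ᵤ c_{v,u} · (∂^u y ∘ g)`, where the coefficients `c_{v,u}` are universal
polynomials in the partial derivatives of the `gⱼ` of order at most `|v|`. They are generated by a
formal derivation of the polynomial ring, and symmetry of second derivatives makes `∂^u`
independent of the order in which the partials are taken.

For invertibility at `z`, the inverse function theorem gives a local inverse `s` of `r` near `r z`.
Since `y = (y ∘ r) ∘ s` near `r z`, the chain matrices satisfy `M_s (r z) · M_r z · ∂^{≤k} y (r z) =
∂^{≤k} y (r z)` for every smooth `y`. Taking for `y` the monomials `∏ₜ (wₜ - (r z)ₜ)^{uₜ}`, whose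
jets at `r z` are nonzero multiples of the standard basis vectors, gives `M_s (r z) · M_r z = 1`.
-/

/-- The partial derivative of `f` with respect to the `i`-th variable. -/
noncomputable def pd {n : ℕ} (i : Fin n) (f : (Fin n → ℂ) → ℂ) : (Fin n → ℂ) → ℂ :=
  fun z => fderiv ℂ f z (Pi.single i 1)

/-- The iterated partial derivative `∂^v f` for a multi-index `v`. -/
noncomputable def mpd {n : ℕ} (v : Fin n → ℕ) (f : (Fin n → ℂ) → ℂ) : (Fin n → ℂ) → ℂ :=
  (List.finRange n).foldr (fun i g => (pd i)^[v i] g) f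

/-- The index set of the generalized gradient up to order `k`: multi-indices of total
degree at most `k` (mixed partials counted once). -/
def MIdx (n k : ℕ) : Type := { v : Fin n → Fin (k + 1) // ∑ i, (v i : ℕ) ≤ k }

instance (n k : ℕ) : Fintype (MIdx n k) := Subtype.fintype _
instance (n k : ℕ) : DecidableEq (MIdx n k) := Subtype.instDecidableEq

open Filter Topology
open scoped Matrix

section PartialDerivatives

variable {n : ℕ}

theorem Filter.EventuallyEq.pd {f g : (Fin n → ℂ) → ℂ} {z : Fin n → ℂ} (h : f =ᶠ[𝓝 z] g)
    (i : Fin n) : pd i f =ᶠ[𝓝 z] pd i g :=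
  h.fderiv.mono fun _ hw => by rw [_root_.pd, _root_.pd, hw]

theorem ContDiffAt.pd {f : (Fin n → ℂ) → ℂ} {z : Fin n → ℂ} (hf : ContDiffAt ℂ ⊤ f z)
    (i : Fin n) : ContDiffAt ℂ ⊤ (pd i f) z :=
  (hf.fderiv_right (m := ⊤) (by simp)).clm_apply contDiffAt_const

theorem pd_comm {f : (Fin n → ℂ) → ℂ} {z : Fin n → ℂ} (hf : ContDiffAt ℂ ⊤ f z) (i j : Fin n) :
    pd i (pd j f) z = pd j (pd i f) z := by
  have hd : DifferentiableAt ℂ (fderiv ℂ f) z :=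
    (hf.fderiv_right (m := ⊤) (by simp)).differentiableAt (by simp)
  have second (a b : Fin n) :
      pd a (pd b f) z = fderiv ℂ (fderiv ℂ f) z (Pi.single a 1) (Pi.single b 1) := by
    change fderiv ℂ (fun w => fderiv ℂ f w (Pi.single b 1)) z (Pi.single a 1) = _
    simp [fderiv_clm_apply hd (differentiableAt_const _)]
  rw [second, second, hf.isSymmSndFDerivAt (by simp)]

theorem pd_mul {f g : (Fin n → ℂ) → ℂ} {z : Fin n → ℂ} (hf : DifferentiableAt ℂ f z)
    (hg : DifferentiableAt ℂ g z) (i : Fin n) :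
    pd i (fun w => f w * g w) z = pd i f z * g z + f z * pd i g z := by
  simp only [pd, fderiv_fun_mul hf hg, add_apply,
    smul_apply, smul_eq_mul]
  ring

theorem pd_sum {ι : Type*} (s : Finset ι) {f : ι → (Fin n → ℂ) → ℂ} {z : Fin n → ℂ}
    (hf : ∀ a ∈ s, DifferentiableAt ℂ (f a) z) (i : Fin n) :
    pd i (fun w => ∑ a ∈ s, f a w) z = ∑ a ∈ s, pd i (f a) z := by
  simp [pd, fderiv_fun_sum hf]

theorem pd_comp {g : (Fin n → ℂ) → Fin n → ℂ} {y : (Fin n → ℂ) → ℂ} {z : Fin n → ℂ}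
    (hy : DifferentiableAt ℂ y (g z)) (hg : DifferentiableAt ℂ g z) (i : Fin n) :
    pd i (fun w => y (g w)) z = ∑ j, pd j y (g z) * pd i (fun w => g w j) z := by
  have hcomp : pd i (fun w => y (g w)) z = fderiv ℂ y (g z) (fderiv ℂ g z (Pi.single i 1)) :=
    congrArg (· (Pi.single i 1)) (fderiv_comp z hy hg)
  rw [hcomp, pi_eq_sum_univ' (fderiv ℂ g z (Pi.single i 1)), map_sum]
  simp [pd, fderiv_apply hg, mul_comm]

end PartialDerivatives

section IteratedPartialDerivatives

variable {n : ℕ}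

noncomputable def pdList (l : List (Fin n)) (f : (Fin n → ℂ) → ℂ) : (Fin n → ℂ) → ℂ :=
  l.foldr pd f

@[simp] theorem pdList_nil (f : (Fin n → ℂ) → ℂ) : pdList [] f = f := rfl

@[simp] theorem pdList_cons (i : Fin n) (l : List (Fin n)) (f : (Fin n → ℂ) → ℂ) :
    pdList (i :: l) f = pd i (pdList l f) := rfl

theorem pdList_append (l₁ l₂ : List (Fin n)) (f : (Fin n → ℂ) → ℂ) :
    pdList (l₁ ++ l₂) f = pdList l₁ (pdList l₂ f) :=
  List.foldr_append

theorem pdList_replicate (m : ℕ) (i : Fin n) (f : (Fin n → ℂ) → ℂ) :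
    pdList (List.replicate m i) f = (pd i)^[m] f := by
  induction m with
  | zero => rfl
  | succ m ih => rw [List.replicate_succ, pdList_cons, ih, Function.iterate_succ_apply']

theorem ContDiffAt.pdList {f : (Fin n → ℂ) → ℂ} {z : Fin n → ℂ} (hf : ContDiffAt ℂ ⊤ f z)
    (l : List (Fin n)) : ContDiffAt ℂ ⊤ (pdList l f) z := by
  induction l with
  | nil => exact hf
  | cons i l ih => exact ih.pd i

theorem Filter.EventuallyEq.pdList {f g : (Fin n → ℂ) → ℂ} {z : Fin n → ℂ} (h : f =ᶠ[𝓝 z] g)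
    (l : List (Fin n)) : pdList l f =ᶠ[𝓝 z] pdList l g := by
  induction l with
  | nil => exact h
  | cons i l ih => exact ih.pd i

theorem pdList_eventuallyEq_of_perm {f : (Fin n → ℂ) → ℂ} {z : Fin n → ℂ}
    (hf : ContDiffAt ℂ ⊤ f z) {l₁ l₂ : List (Fin n)} (h : l₁.Perm l₂) :
    pdList l₁ f =ᶠ[𝓝 z] pdList l₂ f := by
  induction h with
  | nil => rfl
  | cons i _ ih => exact ih.pd i
  | swap i j l =>
    exact (hf.eventually (by simp)).mono fun w hw => pd_comm (hw.pdList l) j i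
  | trans _ _ ih₁ ih₂ => exact ih₁.trans ih₂

def multiIndexList (v : Fin n → ℕ) : List (Fin n) :=
  (List.finRange n).flatMap fun i => List.replicate (v i) i

theorem mpd_eq_pdList (v : Fin n → ℕ) (f : (Fin n → ℂ) → ℂ) :
    mpd v f = pdList (multiIndexList v) f := by
  rw [mpd, multiIndexList]
  induction List.finRange n with
  | nil => rfl
  | cons i L ih =>
    rw [List.foldr_cons, ih, List.flatMap_cons, pdList_append, pdList_replicate]

theorem count_multiIndexList (v : Fin n → ℕ) (i : Fin n) : (multiIndexList v).count i = v i := by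
  simp [multiIndexList, List.count_flatMap, ← Fin.sum_univ_def, List.count_replicate]

theorem length_multiIndexList (v : Fin n → ℕ) : (multiIndexList v).length = ∑ t, v t := by
  simp [multiIndexList, List.length_flatMap, ← Fin.sum_univ_def]

theorem ContDiffAt.mpd {f : (Fin n → ℂ) → ℂ} {z : Fin n → ℂ} (hf : ContDiffAt ℂ ⊤ f z)
    (v : Fin n → ℕ) : ContDiffAt ℂ ⊤ (mpd v f) z := by
  rw [mpd_eq_pdList]
  exact hf.pdList _

theorem Filter.EventuallyEq.mpd {f g : (Fin n → ℂ) → ℂ} {z : Fin n → ℂ} (h : f =ᶠ[𝓝 z] g)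
    (v : Fin n → ℕ) : mpd v f =ᶠ[𝓝 z] mpd v g := by
  simpa only [mpd_eq_pdList] using h.pdList _

@[simp] theorem mpd_zero (f : (Fin n → ℂ) → ℂ) : mpd 0 f = f := by
  simp [mpd_eq_pdList, multiIndexList, List.flatMap]

theorem pd_mpd {f : (Fin n → ℂ) → ℂ} {z : Fin n → ℂ} (hf : ContDiffAt ℂ ⊤ f z)
    (v : Fin n → ℕ) (j : Fin n) : pd j (mpd v f) z = mpd (v + Pi.single j 1) f z := by
  have hperm : (j :: multiIndexList v).Perm (multiIndexList (v + Pi.single j 1)) := by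
    refine List.perm_iff_count.2 fun i => ?_
    rw [List.count_cons, count_multiIndexList, count_multiIndexList]
    simp [Pi.single_apply, eq_comm (a := i)]
  rw [mpd_eq_pdList, mpd_eq_pdList, ← pdList_cons]
  exact (pdList_eventuallyEq_of_perm hf hperm).eq_of_nhds

end IteratedPartialDerivatives

namespace MIdx

variable {n k : ℕ}

def toFun (u : MIdx n k) : Fin n → ℕ := fun t => u.1 t

def deg (u : MIdx n k) : ℕ := ∑ t, u.toFun t

theorem deg_le (u : MIdx n k) : u.deg ≤ k := u.2

theorem toFun_injective : Function.Injective (toFun : MIdx n k → Fin n → ℕ) :=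
  fun _ _ h => Subtype.ext (funext fun t => Fin.ext (congrFun h t))

def ofFun (v : Fin n → ℕ) (hv : ∑ t, v t ≤ k) : MIdx n k :=
  ⟨fun t => ⟨v t, Nat.lt_succ_of_le ((Finset.single_le_sum (fun _ _ => Nat.zero_le _)
    (Finset.mem_univ t)).trans hv)⟩, hv⟩

@[simp] theorem toFun_ofFun (v : Fin n → ℕ) (hv : ∑ t, v t ≤ k) : (ofFun v hv).toFun = v := rfl

instance : Zero (MIdx n k) := ⟨ofFun 0 (by simp)⟩

@[simp] theorem toFun_zero : (0 : MIdx n k).toFun = 0 := rfl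

def IsSucc (u u' : MIdx n k) (j : Fin n) : Prop := u.toFun = u'.toFun + Pi.single j 1

instance (u u' : MIdx n k) (j : Fin n) : Decidable (IsSucc u u' j) :=
  inferInstanceAs (Decidable (_ = _))

theorem IsSucc.deg_eq {u u' : MIdx n k} {j : Fin n} (h : IsSucc u u' j) :
    u.deg = u'.deg + 1 := by
  rw [deg, deg, h]
  simp [Finset.sum_add_distrib]

theorem sum_isSucc {M : Type*} [AddCommMonoid M] {u' : MIdx n k} (hu' : u'.deg < k) (j : Fin n)
    (F : (Fin n → ℕ) → M) :
    ∑ u : MIdx n k, (if IsSucc u u' j then F u.toFun else 0) = F (u'.toFun + Pi.single j 1) := by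
  have hsum : ∑ t, (u'.toFun + Pi.single j 1 : Fin n → ℕ) t ≤ k := by
    rw [Fintype.sum_congr _ _ fun t => Pi.add_apply _ _ t, Finset.sum_add_distrib]
    simp only [Finset.sum_pi_single', Finset.mem_univ, if_true]
    exact hu'
  have hiff (u : MIdx n k) : IsSucc u u' j ↔ u = ofFun _ hsum :=
    ⟨fun h => toFun_injective h, fun h => h ▸ rfl⟩
  simp [hiff]

theorem sum_sum_isSucc {M : Type*} [AddCommMonoid M] (j : Fin n)
    (φ : MIdx n k → (Fin n → ℕ) → M) (hφ : ∀ u', ¬ u'.deg < k → ∀ v, φ u' v = 0) :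
    ∑ u : MIdx n k, ∑ u' : MIdx n k, (if IsSucc u u' j then φ u' u.toFun else 0)
      = ∑ u' : MIdx n k, φ u' (u'.toFun + Pi.single j 1) := by
  rw [Finset.sum_comm]
  refine Finset.sum_congr rfl fun u' _ => ?_
  by_cases hu' : u'.deg < k
  · exact sum_isSucc hu' j (φ u')
  · simp [hφ u' hu']

end MIdx

namespace MvPolynomial

variable {σ R : Type*} [CommSemiring R]

theorem derivation_mem_supported (D : Derivation R (MvPolynomial σ R) (MvPolynomial σ R))
    {s t : Set σ} (hst : s ⊆ t) (hD : ∀ v ∈ s, D (X v) ∈ supported R t) {p : MvPolynomial σ R}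
    (hp : p ∈ supported R s) : D p ∈ supported R t := by
  rw [supported_eq_adjoin_X] at hp
  induction hp using Algebra.adjoin_induction with
  | mem x hx =>
    obtain ⟨v, hv, rfl⟩ := hx
    exact hD v hv
  | algebraMap c => simp
  | add p q _ _ hp hq => simpa using add_mem hp hq
  | mul p q hp' hq' hp hq =>
    rw [← supported_eq_adjoin_X] at hp' hq'
    rw [Derivation.leibniz, smul_eq_mul, smul_eq_mul]
    exact add_mem (mul_mem (supported_mono hst hp') hq) (mul_mem (supported_mono hst hq') hp)

end MvPolynomial

open MvPolynomial

section FormalDerivative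

variable {n k : ℕ}

/-- The variable `X (j, v)` stands for `∂^v gⱼ`, so `∂ᵢ` acts on it by raising `v` in
direction `i`; at the top degree `k` it is sent to `0`. -/
noncomputable def formalPd (i : Fin n) :
    Derivation ℂ (MvPolynomial (Fin n × MIdx n k) ℂ) (MvPolynomial (Fin n × MIdx n k) ℂ) :=
  mkDerivation ℂ fun jv => ∑ w : MIdx n k, if w.IsSucc jv.2 i then X (jv.1, w) else 0

theorem formalPd_X (i : Fin n) (jv : Fin n × MIdx n k) :
    formalPd i (X jv) = ∑ w : MIdx n k, if w.IsSucc jv.2 i then X (jv.1, w) else 0 :=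
  mkDerivation_X _ _ _

/-- The coefficients of the chain rule `∂^l (y ∘ g) = ∑ᵤ chainPoly l u · (∂^u y) ∘ g`;
`formalPd i (X (j, 0))` stands for `∂ᵢ gⱼ`. -/
noncomputable def chainPoly : List (Fin n) → MIdx n k → MvPolynomial (Fin n × MIdx n k) ℂ
  | [], u => if u = 0 then 1 else 0
  | i :: l, u => formalPd i (chainPoly l u) +
      ∑ j, ∑ u', if u.IsSucc u' j then formalPd i (X (j, 0)) * chainPoly l u' else 0

theorem chainPoly_cons (i : Fin n) (l : List (Fin n)) (u : MIdx n k) :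
    chainPoly (i :: l) u = formalPd i (chainPoly l u) +
      ∑ j, ∑ u', if u.IsSucc u' j then formalPd i (X (j, 0)) * chainPoly l u' else 0 :=
  rfl

theorem supported_deg_mono {m m' : ℕ} (h : m ≤ m') :
    supported ℂ {jv : Fin n × MIdx n k | jv.2.deg ≤ m} ≤
      supported ℂ {jv : Fin n × MIdx n k | jv.2.deg ≤ m'} :=
  supported_mono fun _ hjv => le_trans hjv h

theorem formalPd_mem_supported {m : ℕ} {p : MvPolynomial (Fin n × MIdx n k) ℂ}
    (hp : p ∈ supported ℂ {jv | jv.2.deg ≤ m}) (i : Fin n) :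
    formalPd i p ∈ supported ℂ {jv : Fin n × MIdx n k | jv.2.deg ≤ m + 1} := by
  refine derivation_mem_supported _ (fun _ hjv => le_trans hjv m.le_succ) (fun jv hjv => ?_) hp
  rw [formalPd_X]
  refine Subalgebra.sum_mem _ fun w _ => ?_
  split_ifs with hw
  · exact (X_mem_supported (R := ℂ)).2
      (show w.deg ≤ m + 1 from hw.deg_eq ▸ Nat.succ_le_succ hjv)
  · exact Subalgebra.zero_mem _

theorem chainPoly_mem_supported (l : List (Fin n)) (u : MIdx n k) :
    chainPoly l u ∈ supported ℂ {jv : Fin n × MIdx n k | jv.2.deg ≤ l.length} := by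
  induction l generalizing u with
  | nil =>
    unfold chainPoly
    split_ifs
    exacts [Subalgebra.one_mem _, Subalgebra.zero_mem _]
  | cons i l ih =>
    have hX (j : Fin n) : formalPd i (X (j, 0)) ∈
        supported ℂ {jv : Fin n × MIdx n k | jv.2.deg ≤ l.length + 1} :=
      formalPd_mem_supported ((X_mem_supported (R := ℂ)).2 (by simp [MIdx.deg])) i
    refine add_mem (formalPd_mem_supported (ih u) i) (Subalgebra.sum_mem _ fun j _ =>
      Subalgebra.sum_mem _ fun u' _ => ?_)
    split_ifs
    exacts [Subalgebra.mul_mem _ (hX j) (supported_deg_mono l.length.le_succ (ih u')),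
      Subalgebra.zero_mem _]

theorem chainPoly_eq_zero {l : List (Fin n)} {u : MIdx n k} (h : l.length < u.deg) :
    chainPoly l u = 0 := by
  induction l generalizing u with
  | nil =>
    have : u ≠ 0 := by rintro rfl; simp [MIdx.deg] at h
    simp [chainPoly, this]
  | cons i l ih =>
    rw [chainPoly_cons, ih (by simp at h; omega), map_zero, zero_add]
    refine Finset.sum_eq_zero fun j _ => Finset.sum_eq_zero fun u' _ => ?_
    split_ifs with hu
    · rw [ih (by simp [hu.deg_eq] at h; omega), mul_zero]
    · rfl

end FormalDerivative

section PolynomialsInDerivatives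

variable {𝕜 E σ : Type*} [NontriviallyNormedField 𝕜] [NormedAddCommGroup E] [NormedSpace 𝕜 E]

theorem MvPolynomial.differentiableAt_eval {a : E → σ → 𝕜} {z : E}
    (ha : ∀ v, DifferentiableAt 𝕜 (fun w => a w v) z) (p : MvPolynomial σ 𝕜) :
    DifferentiableAt 𝕜 (fun w => eval (a w) p) z := by
  induction p using MvPolynomial.induction_on with
  | C c => simp
  | add p q hp hq =>
    simp only [map_add]
    exact hp.add hq
  | mul_X p v hp =>
    simp only [map_mul, eval_X]
    exact hp.mul (ha v)

theorem MvPolynomial.fderiv_eval_apply {a : E → σ → 𝕜} {z : E}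
    (ha : ∀ v, DifferentiableAt 𝕜 (fun w => a w v) z) (x : E)
    (D : Derivation 𝕜 (MvPolynomial σ 𝕜) (MvPolynomial σ 𝕜)) {s : Set σ}
    (hD : ∀ v ∈ s, fderiv 𝕜 (fun w => a w v) z x = eval (a z) (D (X v)))
    {p : MvPolynomial σ 𝕜} (hp : p ∈ supported 𝕜 s) :
    fderiv 𝕜 (fun w => eval (a w) p) z x = eval (a z) (D p) := by
  rw [supported_eq_adjoin_X] at hp
  induction hp using Algebra.adjoin_induction with
  | mem p hp =>
    obtain ⟨v, hv, rfl⟩ := hp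
    simpa using hD v hv
  | algebraMap c => simp
  | add p q _ _ hp hq =>
    simp [fderiv_fun_add (differentiableAt_eval ha p) (differentiableAt_eval ha q), hp, hq]
  | mul p q _ _ hp hq =>
    simp [fderiv_fun_mul (differentiableAt_eval ha p) (differentiableAt_eval ha q), hp, hq,
      Derivation.leibniz]

end PolynomialsInDerivatives

section ChainRule

variable {n k : ℕ}

noncomputable def coordPartials (g : (Fin n → ℂ) → Fin n → ℂ) (z : Fin n → ℂ) :
    Fin n × MIdx n k → ℂ :=
  fun jv => mpd jv.2.toFun (fun w => g w jv.1) z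

theorem contDiffAt_coordPartials {g : (Fin n → ℂ) → Fin n → ℂ} {z : Fin n → ℂ}
    (hg : ContDiffAt ℂ ⊤ g z) (jv : Fin n × MIdx n k) :
    ContDiffAt ℂ ⊤ (fun w => coordPartials g w jv) z :=
  (contDiffAt_pi.1 hg jv.1).mpd _

theorem pd_eval_coordPartials {g : (Fin n → ℂ) → Fin n → ℂ} {z : Fin n → ℂ}
    (hg : ContDiffAt ℂ ⊤ g z) (i : Fin n) {m : ℕ} (hm : m < k)
    {p : MvPolynomial (Fin n × MIdx n k) ℂ} (hp : p ∈ supported ℂ {jv | jv.2.deg ≤ m}) :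
    pd i (fun w => eval (coordPartials g w) p) z = eval (coordPartials g z) (formalPd i p) := by
  refine fderiv_eval_apply (fun jv => (contDiffAt_coordPartials hg jv).differentiableAt
    (by simp)) _ _ (fun jv (hjv : jv.2.deg ≤ m) => ?_) hp
  rw [formalPd_X, map_sum]
  simp only [apply_ite, eval_X, map_zero, coordPartials]
  rw [MIdx.sum_isSucc (hjv.trans_lt hm) i fun v => mpd v (fun w => g w jv.1) z]
  exact pd_mpd (contDiffAt_pi.1 hg jv.1) _ i

theorem eval_formalPd_X_zero {g : (Fin n → ℂ) → Fin n → ℂ} {z : Fin n → ℂ}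
    (hg : ContDiffAt ℂ ⊤ g z) (hk : 0 < k) (i j : Fin n) :
    eval (coordPartials g z) (formalPd i (X ((j, 0) : Fin n × MIdx n k))) =
      pd i (fun w => g w j) z := by
  rw [← pd_eval_coordPartials hg i hk ((X_mem_supported (R := ℂ)).2 (by simp [MIdx.deg]))]
  simp [coordPartials]

theorem sum_eval_chainPoly_cons (a : Fin n × MIdx n k → ℂ) (Y : (Fin n → ℕ) → ℂ) (i : Fin n)
    {l : List (Fin n)} (hl : l.length < k) :
    ∑ u : MIdx n k, eval a (chainPoly (i :: l) u) * Y u.toFun =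
      ∑ u : MIdx n k, (eval a (formalPd i (chainPoly l u)) * Y u.toFun +
        ∑ j, eval a (chainPoly l u) * eval a (formalPd i (X (j, 0))) *
          Y (u.toFun + Pi.single j 1)) := by
  simp only [chainPoly_cons, map_add, map_sum, apply_ite, map_mul, map_zero, add_mul,
    Finset.sum_mul, ite_mul, zero_mul, Finset.sum_add_distrib]
  congr 1
  rw [Finset.sum_comm]
  conv_rhs => rw [Finset.sum_comm]
  refine Finset.sum_congr rfl fun j _ => ?_
  rw [MIdx.sum_sum_isSucc j fun u' v =>
    eval a (formalPd i (X (j, 0))) * eval a (chainPoly l u') * Y v]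
  · exact Finset.sum_congr rfl fun u' _ => by ring
  · intro u' hu' v
    simp [chainPoly_eq_zero (hl.trans_le (not_lt.1 hu'))]

theorem pdList_comp_eq_sum {y : (Fin n → ℂ) → ℂ} (l : List (Fin n)) (hl : l.length ≤ k)
    {g : (Fin n → ℂ) → Fin n → ℂ} {z : Fin n → ℂ} (hg : ContDiffAt ℂ ⊤ g z)
    (hy : ContDiffAt ℂ ⊤ y (g z)) :
    pdList l (fun w => y (g w)) z =
      ∑ u : MIdx n k, eval (coordPartials g z) (chainPoly l u) * mpd u.toFun y (g z) := by
  induction l generalizing z with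
  | nil => simp [chainPoly, apply_ite]
  | cons i l ih =>
    have hlk : l.length < k := hl
    set c : MIdx n k → (Fin n → ℂ) → ℂ := fun u w => eval (coordPartials g w) (chainPoly l u)
    have hc (u : MIdx n k) : DifferentiableAt ℂ (c u) z :=
      differentiableAt_eval (fun jv => (contDiffAt_coordPartials hg jv).differentiableAt
        (by simp)) _
    have hY (v : Fin n → ℕ) : DifferentiableAt ℂ (fun w => mpd v y (g w)) z :=
      ((hy.mpd v).differentiableAt (by simp)).comp z (hg.differentiableAt (by simp))
    have hsmooth : ∀ᶠ w in 𝓝 z, ContDiffAt ℂ ⊤ g w ∧ ContDiffAt ℂ ⊤ y (g w) :=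
      (hg.eventually (by simp)).and (hg.continuousAt.eventually (hy.eventually (by simp)))
    have hIH : pdList l (fun w => y (g w)) =ᶠ[𝓝 z]
        fun w => ∑ u : MIdx n k, c u w * mpd u.toFun y (g w) :=
      hsmooth.mono fun w hw => ih hlk.le hw.1 hw.2
    rw [pdList_cons, (hIH.pd i).eq_of_nhds,
      sum_eval_chainPoly_cons _ (fun v => mpd v y (g z)) i hlk,
      pd_sum (f := fun u w => c u w * mpd u.toFun y (g w)) _ fun u _ => (hc u).mul (hY _)]
    refine Finset.sum_congr rfl fun u _ => ?_
    rw [pd_mul (hc u) (hY u.toFun), pd_eval_coordPartials hg i hlk (chainPoly_mem_supported l u),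
      pd_comp ((hy.mpd _).differentiableAt (by simp)) (hg.differentiableAt (by simp)),
      Finset.mul_sum]
    congr 1
    refine Finset.sum_congr rfl fun j _ => ?_
    rw [pd_mpd hy, eval_formalPd_X_zero hg (l.length.zero_le.trans_lt hlk)]
    ring

end ChainRule

section Jets

variable {n : ℕ}

noncomputable def jet (k : ℕ) (f : (Fin n → ℂ) → ℂ) (z : Fin n → ℂ) : MIdx n k → ℂ :=
  fun v => mpd v.toFun f z

noncomputable def chainMatrix (k : ℕ) (g : (Fin n → ℂ) → Fin n → ℂ) (z : Fin n → ℂ) :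
    Matrix (MIdx n k) (MIdx n k) ℂ :=
  Matrix.of fun a b => eval (coordPartials g z) (chainPoly (multiIndexList a.toFun) b)

theorem jet_comp {k : ℕ} {g : (Fin n → ℂ) → Fin n → ℂ} {y : (Fin n → ℂ) → ℂ} {z : Fin n → ℂ}
    (hg : ContDiffAt ℂ ⊤ g z) (hy : ContDiffAt ℂ ⊤ y (g z)) :
    jet k (fun w => y (g w)) z = chainMatrix k g z *ᵥ jet k y (g z) := by
  funext a
  rw [jet, mpd_eq_pdList,
    pdList_comp_eq_sum _ ((length_multiIndexList _).trans_le a.deg_le) hg hy]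
  rfl

end Jets

section Monomials

variable {n : ℕ}

noncomputable def monomialAt (c : Fin n → ℕ) (w : Fin n → ℂ) : (Fin n → ℂ) → ℂ :=
  fun z => ∏ t, (z t - w t) ^ c t

theorem contDiff_monomialAt (c : Fin n → ℕ) (w : Fin n → ℂ) : ContDiff ℂ ⊤ (monomialAt c w) :=
  contDiff_prod fun t _ => ((contDiff_apply ℂ ℂ t).sub contDiff_const).pow _

theorem pd_monomialAt (c : Fin n → ℕ) (w : Fin n → ℂ) (i : Fin n) :
    pd i (monomialAt c w) = fun z => c i * monomialAt (c - Pi.single i 1) w z := by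
  funext z
  have hfac (t : Fin n) : HasFDerivAt (fun z : Fin n → ℂ => (z t - w t) ^ c t)
      ((c t • (z t - w t) ^ (c t - 1)) • ContinuousLinearMap.proj t) z :=
    ((hasFDerivAt_apply (𝕜 := ℂ) t z).sub_const (w t)).pow (c t)
  rw [pd, show monomialAt c w = fun z => ∏ t ∈ Finset.univ, (z t - w t) ^ c t from rfl,
    (HasFDerivAt.finsetProd fun t _ => hfac t).fderiv]
  simp only [nsmul_eq_mul, sum_apply, smul_apply,
    ContinuousLinearMap.proj_apply, Pi.single_apply, smul_eq_mul, mul_ite, mul_one, mul_zero,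
    Finset.sum_ite_eq', Finset.mem_univ, if_true]
  have hrest : ∏ t ∈ Finset.univ.erase i, (z t - w t) ^ (c - Pi.single i 1 : Fin n → ℕ) t =
      ∏ t ∈ Finset.univ.erase i, (z t - w t) ^ c t :=
    Finset.prod_congr rfl fun t ht => by
      rw [Pi.sub_apply, Pi.single_eq_of_ne (Finset.ne_of_mem_erase ht), Nat.sub_zero]
  rw [monomialAt, ← Finset.mul_prod_erase _ _ (Finset.mem_univ i), hrest, Pi.sub_apply,
    Pi.single_eq_same]
  ring

theorem pd_const_mul (a : ℂ) {f : (Fin n → ℂ) → ℂ} {z : Fin n → ℂ} (hf : DifferentiableAt ℂ f z)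
    (i : Fin n) : pd i (fun w => a * f w) z = a * pd i f z := by
  simp [pd, fderiv_const_mul hf]

theorem pdList_monomialAt (c : Fin n → ℕ) (w : Fin n → ℂ) (l : List (Fin n)) :
    pdList l (monomialAt c w) = fun z =>
      (∏ t, ((c t).descFactorial (l.count t) : ℂ)) * monomialAt (c - fun t => l.count t) w z := by
  induction l with
  | nil => funext z; simp [← Pi.zero_def]
  | cons i l ih =>
    funext z
    rw [pdList_cons, ih, pd_const_mul _ ((contDiff_monomialAt _ _).differentiable (by simp) z),
      pd_monomialAt]
    have hexp : (c - fun t => l.count t) - Pi.single i 1 = c - fun t => (i :: l).count t := by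
      funext t
      by_cases ht : t = i
      · subst ht; simp [Nat.sub_sub]
      · simp [ht, List.count_cons, Ne.symm ht]
    have hcoef (t : Fin n) : ((c t).descFactorial ((i :: l).count t) : ℂ) =
        (c t).descFactorial (l.count t) * (if t = i then ((c i - l.count i : ℕ) : ℂ) else 1) := by
      by_cases ht : t = i
      · subst ht; simp [Nat.descFactorial_succ, mul_comm]
      · simp [ht, Ne.symm ht]
    rw [hexp, Finset.prod_congr rfl fun t _ => hcoef t, Finset.prod_mul_distrib,
      Finset.prod_ite_eq' Finset.univ i]
    simp only [Finset.mem_univ, if_true, Pi.sub_apply]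
    ring

theorem mpd_monomialAt_self (v c : Fin n → ℕ) (w : Fin n → ℂ) :
    mpd v (monomialAt c w) w = if v = c then ∏ t, ((c t).factorial : ℂ) else 0 := by
  simp only [mpd_eq_pdList, pdList_monomialAt, count_multiIndexList, monomialAt, sub_self]
  split_ifs with h
  · subst h
    simp [Nat.descFactorial_self]
  · obtain ⟨t, ht⟩ := Function.ne_iff.1 h
    rcases ht.lt_or_gt with hlt | hgt
    · exact mul_eq_zero_of_right _
        (Finset.prod_eq_zero (Finset.mem_univ t) (zero_pow (by simp; omega)))
    · exact mul_eq_zero_of_left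
        (Finset.prod_eq_zero (Finset.mem_univ t)
          (by simp [Nat.descFactorial_eq_zero_iff_lt.2 hgt])) _

theorem jet_monomialAt {k : ℕ} (u : MIdx n k) (w : Fin n → ℂ) :
    jet k (monomialAt u.toFun w) w = Pi.single u (∏ t, ((u.toFun t).factorial : ℂ)) := by
  funext v
  simp [jet, mpd_monomialAt_self, Pi.single_apply, MIdx.toFun_injective.eq_iff]

end Monomials

section Invertibility

variable {n k : ℕ}

theorem eq_one_of_mulVec_jet {C : Matrix (MIdx n k) (MIdx n k) ℂ} {w : Fin n → ℂ}
    (h : ∀ y, ContDiff ℂ ⊤ y → C *ᵥ jet k y w = jet k y w) : C = 1 := by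
  refine Matrix.ext_of_mulVec_single fun u => ?_
  have hu := h _ (contDiff_monomialAt u.toFun w)
  have hfac : ∏ t, ((u.toFun t).factorial : ℂ) ≠ 0 :=
    Finset.prod_ne_zero_iff.2 fun t _ => Nat.cast_ne_zero.2 (Nat.factorial_ne_zero _)
  rw [jet_monomialAt, ← mul_one (∏ t, _), ← smul_eq_mul, Pi.single_smul',
    Matrix.mulVec_smul] at hu
  rw [Matrix.one_mulVec]
  exact smul_right_injective _ hfac hu

theorem exists_hasFDerivAt_equiv_of_det_ne_zero {r : (Fin n → ℂ) → Fin n → ℂ} {z : Fin n → ℂ}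
    (hr : DifferentiableAt ℂ r z)
    (hJ : (Matrix.of fun i j : Fin n => fderiv ℂ (fun w => r w i) z (Pi.single j 1)).det ≠ 0) :
    ∃ e : (Fin n → ℂ) ≃L[ℂ] (Fin n → ℂ), HasFDerivAt r (e : (Fin n → ℂ) →L[ℂ] (Fin n → ℂ)) z := by
  have hmat : (Matrix.of fun i j : Fin n => fderiv ℂ (fun w => r w i) z (Pi.single j 1)) =
      LinearMap.toMatrix' (fderiv ℂ r z : (Fin n → ℂ) →ₗ[ℂ] (Fin n → ℂ)) := by
    ext i j
    simp [LinearMap.toMatrix'_apply, fderiv_apply hr]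
  rw [hmat, LinearMap.det_toMatrix'] at hJ
  exact ⟨(fderiv ℂ r z).toContinuousLinearEquivOfDetNeZero hJ, by simpa using hr.hasFDerivAt⟩

theorem isUnit_chainMatrix {r : (Fin n → ℂ) → Fin n → ℂ} {z : Fin n → ℂ}
    (hr : ContDiffAt ℂ ⊤ r z)
    (hJ : (Matrix.of fun i j : Fin n => fderiv ℂ (fun w => r w i) z (Pi.single j 1)).det ≠ 0) :
    IsUnit (chainMatrix k r z) := by
  obtain ⟨e, he⟩ := exists_hasFDerivAt_equiv_of_det_ne_zero (hr.differentiableAt (by simp)) hJ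
  obtain ⟨s, hs, hsr, hrs⟩ : ∃ s : (Fin n → ℂ) → Fin n → ℂ, ContDiffAt ℂ ⊤ s (r z) ∧
      s (r z) = z ∧ ∀ᶠ w in 𝓝 (r z), r (s w) = w :=
    ⟨_, hr.to_localInverse he (by simp), hr.localInverse_apply_image he (by simp),
      (hr.hasStrictFDerivAt' he (by simp)).eventually_right_inverse⟩
  have hleft : chainMatrix k s (r z) * chainMatrix k r z = 1 := by
    refine eq_one_of_mulVec_jet (w := r z) fun y hy => ?_
    have hyr : ContDiffAt ℂ ⊤ (fun w => y (r w)) (s (r z)) := by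
      rw [hsr]
      exact hy.contDiffAt.comp z hr
    have hys : (fun w => y (r (s w))) =ᶠ[𝓝 (r z)] y := hrs.mono fun w hw => by simp only [hw]
    have hcomp := jet_comp (k := k) hs hyr
    rw [hsr] at hcomp
    rw [← Matrix.mulVec_mulVec, ← jet_comp hr hy.contDiffAt, ← hcomp]
    exact funext fun v => (hys.mpd v.toFun).eq_of_nhds
  exact (Matrix.isUnit_iff_isUnit_det _).2 (Matrix.isUnit_det_of_left_inverse hleft)

end Invertibility

theorem stmt11_general (n k : ℕ)
    (r : (Fin n → ℂ) → Fin n → ℂ) (hr : ContDiff ℂ ⊤ r)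
    (U : Set (Fin n → ℂ))
    (hJ : ∀ z ∈ U,
      (Matrix.of fun i j : Fin n => fderiv ℂ (fun w => r w i) z (Pi.single j 1)).det ≠ 0) :
    ∃ M : (Fin n → ℂ) → Matrix (MIdx n k) (MIdx n k) ℂ,
      (∀ a b : MIdx n k, ∃ P : MvPolynomial (Fin n × MIdx n k) ℂ, ∀ z,
        M z a b = MvPolynomial.eval
          (fun iv : Fin n × MIdx n k =>
            mpd (fun t => (iv.2.1 t : ℕ)) (fun w => r w iv.1) z) P) ∧
      (∀ y : (Fin n → ℂ) → ℂ, ContDiff ℂ ⊤ y → ∀ z ∈ U,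
        (fun v : MIdx n k => mpd (fun t => (v.1 t : ℕ)) (fun w => y (r w)) z)
          = (M z).mulVec fun v : MIdx n k => mpd (fun t => (v.1 t : ℕ)) y (r z)) ∧
      (∀ z ∈ U, IsUnit (M z)) :=
  ⟨chainMatrix k r, fun a b => ⟨chainPoly (multiIndexList a.toFun) b, fun _ => rfl⟩,
    fun _ hy _ _ => jet_comp hr.contDiffAt hy.contDiffAt,
    fun z hz => isUnit_chainMatrix hr.contDiffAt (hJ z hz)⟩

/-- For a change of variables `r` with generically invertible Jacobian and `k ≥ 1`, there
is a matrix `M(z)`, whose entries are polynomial expressions in the partial derivatives of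
the `rᵢ`, such that for every smooth `y`, `∂^{≤k}(y ∘ r)(z) = M(z) · (∂^{≤k} y)(r(z))`,
and `M(z)` is invertible on the open set where the Jacobian is. -/
theorem stmt11 (n k : ℕ) (hk : 0 < k)
    (r : (Fin n → ℂ) → Fin n → ℂ) (hr : ContDiff ℂ ⊤ r)
    (U : Set (Fin n → ℂ)) (hU : IsOpen U) (hUne : U.Nonempty)
    (hJ : ∀ z ∈ U,
      (Matrix.of fun i j : Fin n => fderiv ℂ (fun w => r w i) z (Pi.single j 1)).det ≠ 0) :
    ∃ M : (Fin n → ℂ) → Matrix (MIdx n k) (MIdx n k) ℂ,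
      (∀ a b : MIdx n k, ∃ P : MvPolynomial (Fin n × MIdx n k) ℂ, ∀ z,
        M z a b = MvPolynomial.eval
          (fun iv : Fin n × MIdx n k =>
            mpd (fun t => (iv.2.1 t : ℕ)) (fun w => r w iv.1) z) P) ∧
      (∀ y : (Fin n → ℂ) → ℂ, ContDiff ℂ ⊤ y → ∀ z ∈ U,
        (fun v : MIdx n k => mpd (fun t => (v.1 t : ℕ)) (fun w => y (r w)) z)
          = (M z).mulVec fun v : MIdx n k => mpd (fun t => (v.1 t : ℕ)) y (r z)) ∧
      (∀ z ∈ U, IsUnit (M z)) :=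
  stmt11_general n k r hr U hJ
end

section
/- The function Y(z) = −(z⁶ + 3Cz³ − 3z⁴ + 3z² − 1)²/(576 z⁶), for any constant C ∈ ℂ, satisfies the algebraic ODE (z¹² − 2z¹⁰ − z⁸ + 4z⁶ − z⁴ − 2z² + 1)·Y(z) + 16 z⁸ · (Y'(z))² = 0 for all z ≠ 0. -/
/-!
Write `Y = -w²` with `w z = (z⁶ + 3Cz³ − 3z⁴ + 3z² − 1) / (24z³) = (z³ − 3z + 3C + 3/z − 1/z³) / 24`.
The constant `C` disappears on differentiating: `8z⁴ w' = z⁶ − z⁴ − z² + 1`, and the coefficient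
of `Y` in the ODE is exactly the square of this polynomial. Since `Y' = −2ww'`, the ODE becomes
`w² ((8z⁴w')² − (z⁶ − z⁴ − z² + 1)²) = 0`.
-/

theorem sq_mul_neg_sq_add_deriv_sq_eq_zero {𝕜 : Type*} [NontriviallyNormedField 𝕜] [CharZero 𝕜]
    {w : 𝕜 → 𝕜} {q z : 𝕜} (hz : z ≠ 0) (hw : HasDerivAt w (q / (8 * z ^ 4)) z) :
    q ^ 2 * (-(w z) ^ 2) + 16 * z ^ 8 * (deriv (fun z => -(w z) ^ 2) z) ^ 2 = 0 := by
  rw [((hw.fun_pow 2).fun_neg).deriv]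
  field_simp
  ring

noncomputable def sqrtNegY (C z : ℂ) : ℂ :=
  (z ^ 6 + 3 * C * z ^ 3 - 3 * z ^ 4 + 3 * z ^ 2 - 1) / (24 * z ^ 3)

theorem hasDerivAt_sqrtNegY (C : ℂ) {z : ℂ} (hz : z ≠ 0) :
    HasDerivAt (sqrtNegY C) ((z ^ 6 - z ^ 4 - z ^ 2 + 1) / (8 * z ^ 4)) z := by
  have hnum : HasDerivAt (fun z : ℂ => z ^ 6 + 3 * C * z ^ 3 - 3 * z ^ 4 + 3 * z ^ 2 - 1)
      (6 * z ^ 5 + 3 * C * (3 * z ^ 2) - 3 * (4 * z ^ 3) + 3 * (2 * z)) z := by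
    simpa using ((((hasDerivAt_pow 6 z).add ((hasDerivAt_pow 3 z).const_mul (3 * C))).sub
      ((hasDerivAt_pow 4 z).const_mul 3)).add ((hasDerivAt_pow 2 z).const_mul 3)).sub_const 1
  have hden : HasDerivAt (fun z : ℂ => 24 * z ^ 3) (24 * (3 * z ^ 2)) z := by
    simpa using (hasDerivAt_pow 3 z).const_mul (24 : ℂ)
  refine (hnum.fun_div hden (by simp [hz])).congr_deriv ?_
  field_simp
  ring

/-- `Y(z) = −(z⁶ + 3Cz³ − 3z⁴ + 3z² − 1)²/(576 z⁶)` satisfies the algebraic ODE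
`(z¹² − 2z¹⁰ − z⁸ + 4z⁶ − z⁴ − 2z² + 1)·Y + 16z⁸·(Y')² = 0` for all `z ≠ 0`. -/
theorem stmt15 (C : ℂ)
    (Y : ℂ → ℂ)
    (hY : Y = fun z => -(z ^ 6 + 3 * C * z ^ 3 - 3 * z ^ 4 + 3 * z ^ 2 - 1) ^ 2 / (576 * z ^ 6)) :
    ∀ z : ℂ, z ≠ 0 →
      (z ^ 12 - 2 * z ^ 10 - z ^ 8 + 4 * z ^ 6 - z ^ 4 - 2 * z ^ 2 + 1) * Y z
        + 16 * z ^ 8 * (deriv Y z) ^ 2 = 0 := by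
  intro z hz
  have hY_eq : Y = fun z => -(sqrtNegY C z) ^ 2 := by
    funext z
    rw [hY, sqrtNegY, div_pow]
    ring
  have hcoeff : z ^ 12 - 2 * z ^ 10 - z ^ 8 + 4 * z ^ 6 - z ^ 4 - 2 * z ^ 2 + 1
      = (z ^ 6 - z ^ 4 - z ^ 2 + 1) ^ 2 := by ring
  rw [hcoeff, hY_eq]
  exact sq_mul_neg_sq_add_deriv_sq_eq_zero hz (hasDerivAt_sqrtNegY C hz)
end

section
/- Let F : ℝ → ℝ be differentiable, define w₁(z) = z₂² − z₁ − z₂ and w₂(z) = (5/6)z₂³ − (5/4)z₂² + (3/4)z₂ − 1/6 + (1/2)z₁z₂² − (1/2)z₁² − z₁z₂ + (3/4)z₁ + z₃, and set Y(z₁,z₂,z₃) = 2/(1 − 2z₂ + F(w₁(z), w₂(z))). Then on the open set where the denominator is nonzero, Y satisfies the PDE (2z₂ − 1)·∂Y/∂z₁ + z₂(z₁ − z₂²)·∂Y/∂z₃ − Y² + ∂Y/∂z₂ = 0. -/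
/-! Write `V = (2z₂ - 1, 1, z₂(z₁ - z₂²))`; the left-hand side of the PDE is `V·∇Y - Y²`.
Both `w₁` and `w₂` are first integrals of `V` (`V·∇wᵢ = 0`), so by the chain rule the
denominator `D = 1 - 2z₂ + F(w₁, w₂)` satisfies `V·∇D = -2` whatever `F` is, and then
`V·∇(2/D) = 2·2/D² = (2/D)²`. -/

section Directional

variable {E : Type*} [NormedAddCommGroup E] [NormedSpace ℝ E]

theorem fderiv_apply_eq_sum_partials {G : ℝ × ℝ × ℝ → E} {p : ℝ × ℝ × ℝ}
    (hG : DifferentiableAt ℝ G p) (v : ℝ × ℝ × ℝ) :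
    fderiv ℝ G p v = v.1 • deriv (fun t => G (t, p.2.1, p.2.2)) p.1
      + v.2.1 • deriv (fun t => G (p.1, t, p.2.2)) p.2.1
      + v.2.2 • deriv (fun t => G (p.1, p.2.1, t)) p.2.2 := by
  have hG' := hG.hasFDerivAt
  have h₁ := (hG'.comp_hasDerivAt p.1
    ((hasDerivAt_id p.1).prodMk (hasDerivAt_const p.1 p.2))).deriv
  have h₂ := (hG'.comp_hasDerivAt p.2.1 ((hasDerivAt_const p.2.1 p.1).prodMk
    ((hasDerivAt_id p.2.1).prodMk (hasDerivAt_const p.2.1 p.2.2)))).deriv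
  have h₃ := (hG'.comp_hasDerivAt p.2.2 ((hasDerivAt_const p.2.2 p.1).prodMk
    ((hasDerivAt_const p.2.2 p.2.1).prodMk (hasDerivAt_id p.2.2)))).deriv
  simp only [Function.comp_def, id] at h₁ h₂ h₃
  rw [h₁, h₂, h₃, ← map_smul, ← map_smul, ← map_smul, ← map_add, ← map_add]
  congr 1
  ext <;> simp

theorem fderiv_const_div_apply_eq_sq {D : E → ℝ} {p v : E} {k : ℝ}
    (hD : DifferentiableAt ℝ D p) (hp : D p ≠ 0) (hv : fderiv ℝ D p v = -k) :
    fderiv ℝ (fun x => k / D x) p v = (k / D p) ^ 2 := by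
  have h := ((hasDerivAt_inv hp).const_mul k).hasFDerivAt.comp p hD.hasFDerivAt
  rw [show (fun x => k / D x) = (fun y => k * y⁻¹) ∘ D from rfl, h.fderiv]
  simp [hv]
  field_simp

end Directional

noncomputable def charField (p : ℝ × ℝ × ℝ) : ℝ × ℝ × ℝ :=
  (2 * p.2.1 - 1, 1, p.2.1 * (p.1 - p.2.1 ^ 2))

noncomputable def firstIntegral₁ (p : ℝ × ℝ × ℝ) : ℝ :=
  p.2.1 ^ 2 - p.1 - p.2.1

noncomputable def firstIntegral₂ (p : ℝ × ℝ × ℝ) : ℝ :=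
  (5 / 6) * p.2.1 ^ 3 - (5 / 4) * p.2.1 ^ 2 + (3 / 4) * p.2.1 - 1 / 6
    + (1 / 2) * p.1 * p.2.1 ^ 2 - (1 / 2) * p.1 ^ 2 - p.1 * p.2.1 + (3 / 4) * p.1 + p.2.2

@[fun_prop]
theorem differentiable_firstIntegral₁ : Differentiable ℝ firstIntegral₁ := by
  unfold firstIntegral₁
  fun_prop

@[fun_prop]
theorem differentiable_firstIntegral₂ : Differentiable ℝ firstIntegral₂ := by
  unfold firstIntegral₂
  fun_prop

theorem fderiv_firstIntegral₁_charField (p : ℝ × ℝ × ℝ) :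
    fderiv ℝ firstIntegral₁ p (charField p) = 0 := by
  rw [fderiv_apply_eq_sum_partials (differentiable_firstIntegral₁ p)]
  simp (disch := fun_prop) [firstIntegral₁, charField]

theorem fderiv_firstIntegral₂_charField (p : ℝ × ℝ × ℝ) :
    fderiv ℝ firstIntegral₂ p (charField p) = 0 := by
  rw [fderiv_apply_eq_sum_partials (differentiable_firstIntegral₂ p)]
  simp (disch := fun_prop) [firstIntegral₂, charField]
  ring

noncomputable def denom (F : ℝ × ℝ → ℝ) (p : ℝ × ℝ × ℝ) : ℝ :=
  1 - 2 * p.2.1 + F (firstIntegral₁ p, firstIntegral₂ p)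

theorem fderiv_denom_charField {F : ℝ × ℝ → ℝ} {p : ℝ × ℝ × ℝ}
    (hF : DifferentiableAt ℝ F (firstIntegral₁ p, firstIntegral₂ p)) :
    fderiv ℝ (denom F) p (charField p) = -2 := by
  have hI := (differentiable_firstIntegral₁ p).hasFDerivAt.prodMk
    (differentiable_firstIntegral₂ p).hasFDerivAt
  have h : HasFDerivAt (denom F) _ p :=
    ((hasFDerivAt_const (1 : ℝ) p).sub (hasFDerivAt_snd.fst.const_mul (2 : ℝ))).add
      (hF.hasFDerivAt.comp p hI)
  rw [h.fderiv]
  simp only [add_apply, ContinuousLinearMap.comp_apply, ContinuousLinearMap.prod_apply,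
    fderiv_firstIntegral₁_charField, fderiv_firstIntegral₂_charField, ← Prod.zero_eq_mk, map_zero]
  simp [charField]

/-- Let `F` be `C¹`, `w₁(z) = z₂² − z₁ − z₂`,
`w₂(z) = (5/6)z₂³ − (5/4)z₂² + (3/4)z₂ − 1/6 + (1/2)z₁z₂² − (1/2)z₁² − z₁z₂ + (3/4)z₁ + z₃`,
and `Y = 2/(1 − 2z₂ + F(w₁,w₂))`. Then where the denominator is nonzero, `Y` satisfies
`(2z₂−1)·Y_{z₁} + z₂(z₁−z₂²)·Y_{z₃} − Y² + Y_{z₂} = 0`. -/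
theorem stmt18 (F : ℝ × ℝ → ℝ) (hF : ContDiff ℝ 1 F)
    (w₁ w₂ : ℝ → ℝ → ℝ → ℝ)
    (hw₁ : w₁ = fun z₁ z₂ _z₃ => z₂ ^ 2 - z₁ - z₂)
    (hw₂ : w₂ = fun z₁ z₂ z₃ => (5 / 6) * z₂ ^ 3 - (5 / 4) * z₂ ^ 2 + (3 / 4) * z₂ - 1 / 6
        + (1 / 2) * z₁ * z₂ ^ 2 - (1 / 2) * z₁ ^ 2 - z₁ * z₂ + (3 / 4) * z₁ + z₃)
    (Y : ℝ → ℝ → ℝ → ℝ)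
    (hYdef : Y = fun z₁ z₂ z₃ => 2 / (1 - 2 * z₂ + F (w₁ z₁ z₂ z₃, w₂ z₁ z₂ z₃))) :
    ∀ z₁ z₂ z₃ : ℝ, 1 - 2 * z₂ + F (w₁ z₁ z₂ z₃, w₂ z₁ z₂ z₃) ≠ 0 →
      (2 * z₂ - 1) * deriv (fun t => Y t z₂ z₃) z₁
        + z₂ * (z₁ - z₂ ^ 2) * deriv (fun t => Y z₁ z₂ t) z₃
        - (Y z₁ z₂ z₃) ^ 2 + deriv (fun t => Y z₁ t z₃) z₂ = 0 := by
  subst hw₁ hw₂ hYdef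
  intro z₁ z₂ z₃ hD
  replace hD : denom F (z₁, z₂, z₃) ≠ 0 := hD
  have hF' := hF.differentiable one_ne_zero
  have hdenom : DifferentiableAt ℝ (denom F) (z₁, z₂, z₃) := by
    unfold denom
    fun_prop
  have hY : DifferentiableAt ℝ (fun q => 2 / denom F q) (z₁, z₂, z₃) := by
    fun_prop (disch := exact hD)
  have h := fderiv_apply_eq_sum_partials hY (charField (z₁, z₂, z₃))
  rw [fderiv_const_div_apply_eq_sq hdenom hD (fderiv_denom_charField (hF' _))] at h
  simp only [denom, firstIntegral₁, firstIntegral₂, charField, smul_eq_mul] at h ⊢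
  linear_combination -h
end

section
/- For a constant K > 0, the function Y(z₁,z₂) = √K·arctan(z₁) − √K·arctan(√(4z₂−K)/√K) + √(4z₂−K) satisfies the PDE (∂Y/∂z₁)²·(z₁²+1)² + 4z₂²·(∂Y/∂z₂)² − 4z₂ = 0 on the domain {(z₁,z₂) ∈ ℝ² : 4z₂ > K}. -/
/-! The `z₁`-derivative of `Y` is `√K / (1 + z₁²)`. Writing `u = 4z₂ − K`, the `z₂`-dependent part
`√u − √K·arctan(√u/√K)` has `u`-derivative `√u / (2(K + u)) = √u / (8z₂)`, so `∂Y/∂z₂ = √u / (2z₂)`.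
The PDE then reads `K + u − 4z₂ = 0`. -/

open Real

theorem hasDerivAt_sqrt_sub_mul_arctan_sqrt_div {K u : ℝ} (hK : 0 < K) (hu : 0 < u) :
    HasDerivAt (fun v => √v - √K * arctan (√v / √K)) (√u / (2 * (K + u))) u := by
  have hsqrt : HasDerivAt (fun v => √v) (1 / (2 * √u)) u := by
    simpa using (hasDerivAt_id u).sqrt hu.ne'
  refine (hsqrt.sub (((hsqrt.div_const √K).arctan).const_mul √K)).congr_deriv ?_
  have hsK : √K ^ 2 = K := sq_sqrt hK.le
  have hsu : √u ^ 2 = u := sq_sqrt hu.le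
  have : √K ≠ 0 := (sqrt_pos.2 hK).ne'
  have : √u ≠ 0 := (sqrt_pos.2 hu).ne'
  rw [div_pow, hsK, hsu]
  field_simp
  linear_combination (-1) * hsu

theorem hasDerivAt_sqrt_four_mul_sub_sub_mul_arctan {K t : ℝ} (hK : 0 < K) (ht : K < 4 * t) :
    HasDerivAt (fun s => √(4 * s - K) - √K * arctan (√(4 * s - K) / √K))
      (√(4 * t - K) / (2 * t)) t := by
  have hlin : HasDerivAt (fun s : ℝ => 4 * s - K) 4 t := by
    simpa using ((hasDerivAt_id t).const_mul 4).sub_const K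
  refine ((hasDerivAt_sqrt_sub_mul_arctan_sqrt_div hK (sub_pos.2 ht)).comp t hlin).congr_deriv ?_
  have : t ≠ 0 := by linarith
  field_simp
  ring

/-- For `K > 0`, the function
`Y(z₁,z₂) = √K·arctan(z₁) − √K·arctan(√(4z₂−K)/√K) + √(4z₂−K)` satisfies the PDE
`(∂Y/∂z₁)²·(z₁²+1)² + 4z₂²·(∂Y/∂z₂)² − 4z₂ = 0` on `{4z₂ > K}`. -/
theorem stmt19 (K : ℝ) (hK : 0 < K)
    (Y : ℝ → ℝ → ℝ)
    (hY : Y = fun z₁ z₂ => Real.sqrt K * Real.arctan z₁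
        - Real.sqrt K * Real.arctan (Real.sqrt (4 * z₂ - K) / Real.sqrt K)
        + Real.sqrt (4 * z₂ - K)) :
    ∀ z₁ z₂ : ℝ, K < 4 * z₂ →
      (deriv (fun t => Y t z₂) z₁) ^ 2 * (z₁ ^ 2 + 1) ^ 2
        + 4 * z₂ ^ 2 * (deriv (fun t => Y z₁ t) z₂) ^ 2 - 4 * z₂ = 0 := by
  subst hY
  intro z₁ z₂ hz
  have hd₁ : deriv (fun t => √K * arctan t - √K * arctan (√(4 * z₂ - K) / √K) + √(4 * z₂ - K)) z₁
      = √K / (1 + z₁ ^ 2) :=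
    ((((hasDerivAt_arctan z₁).const_mul √K).sub_const _).add_const _).deriv.trans (by ring)
  have hd₂ : deriv (fun t => √K * arctan z₁ - √K * arctan (√(4 * t - K) / √K) + √(4 * t - K)) z₂
      = √(4 * z₂ - K) / (2 * z₂) := by
    have h := (hasDerivAt_sqrt_four_mul_sub_sub_mul_arctan hK hz).const_add (√K * arctan z₁)
    rw [← h.deriv]
    congr 1
    funext t
    ring
  rw [hd₁, hd₂, div_pow, div_pow, sq_sqrt hK.le, sq_sqrt (by linarith)]
  have : z₂ ≠ 0 := by linarith
  field_simp
  ring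
end
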